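/- arXiv:2211.02756 — 2 statements merged into one kernel-verified Lean document; each statement's English description precedes it below -/
import Mathlib

section
/- Let M₁, M₂ be Hermitian q^n×q^n complex matrices and let U = U₁⊗⋯⊗Uₙ be a local unitary on (ℂ^q)^{⊗n}. Then A(z; U M₁ U†, U M₂ U†) = A(z; M₁, M₂) as polynomials in ℂ[z]. -/
open Matrix Polynomial
open scoped BigOperators ComplexConjugate Kronecker

noncomputable section

/-- Generalized Pauli `X` (cyclic shift) on `ℂ^q`. -/
def Xmat (q : ℕ) : Matrix (Fin q) (Fin q) ℂ :=
  fun i j => if (i : ℕ) = ((j : ℕ) + 1) % q then 1 else 0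

/-- Generalized Pauli `Z` (clock) on `ℂ^q`, `Z|j⟩ = ζ^j |j⟩` with `ζ = exp(2πi/q)`. -/
def Zmat (q : ℕ) : Matrix (Fin q) (Fin q) ℂ :=
  Matrix.diagonal fun j => Complex.exp (2 * (Real.pi : ℂ) * Complex.I / (q : ℂ)) ^ (j : ℕ)

/-- Single-qudit Pauli `E(a,b) = X^a Z^b` for a label `(a,b) ∈ (ℤ/qℤ)²`. -/
def Epauli (q : ℕ) (p : ZMod q × ZMod q) : Matrix (Fin q) (Fin q) ℂ :=
  Xmat q ^ p.1.val * Zmat q ^ p.2.val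

/-- Multi-qudit Pauli `E(p) = E(p₁) ⊗ ⋯ ⊗ E(pₙ)` on the space indexed by `ι → Fin q`. -/
def EV (q : ℕ) {ι : Type} [Fintype ι] (p : ι → ZMod q × ZMod q) :
    Matrix (ι → Fin q) (ι → Fin q) ℂ :=
  fun v w => ∏ i, Epauli q (p i) (v i) (w i)

/-- Weight of a Pauli label vector: the number of non-identity factors. -/
def wtL (q : ℕ) {ι : Type} [Fintype ι] (p : ι → ZMod q × ZMod q) : ℕ :=
  (Finset.univ.filter fun i => p i ≠ 0).card

/-- Kronecker (tensor) product of a family of local `q × q` matrices. -/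
def kron (q : ℕ) {ι : Type} [Fintype ι] (Us : ι → Matrix (Fin q) (Fin q) ℂ) :
    Matrix (ι → Fin q) (ι → Fin q) ℂ :=
  fun v w => ∏ i, Us i (v i) (w i)

/-- Shor–Laflamme enumerator polynomial `A(z; M₁, M₂)`. -/
def enumA (q : ℕ) [NeZero q] {ι : Type} [Fintype ι] [DecidableEq ι]
    (M₁ M₂ : Matrix (ι → Fin q) (ι → Fin q) ℂ) : Polynomial ℂ :=
  ∑ p : ι → ZMod q × ZMod q,
    Polynomial.C (Matrix.trace ((EV q p)ᴴ * M₁) * Matrix.trace (EV q p * M₂)) *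
      Polynomial.X ^ wtL q p

section Site
variable (q : ℕ) [NeZero q]
set_option linter.unusedSectionVars false

abbrev zeta (q : ℕ) : ℂ := Complex.exp (2 * (Real.pi : ℂ) * Complex.I / (q : ℂ))

lemma Xpow_apply (a : ℕ) (i j : Fin q) :
    (Xmat q ^ a) i j = if (i : ℕ) = ((j : ℕ) + a) % q then 1 else 0 := by
  induction a generalizing j with
  | zero => simp [Matrix.one_apply, Nat.mod_eq_of_lt j.isLt, Fin.ext_iff, eq_comm]
  | succ a ih =>
    rw [pow_succ, Matrix.mul_apply]
    have hqpos : 0 < q := Nat.pos_of_ne_zero (NeZero.ne q)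
    set k0 : Fin q := ⟨((j : ℕ) + 1) % q, Nat.mod_lt _ hqpos⟩ with hk0
    have hX : ∀ k : Fin q, (Xmat q) k j = if k = k0 then (1:ℂ) else 0 := by
      intro k; simp [Xmat, Fin.ext_iff, hk0]
    simp_rw [hX, ih, mul_ite, mul_one, mul_zero]
    rw [Finset.sum_ite_eq' Finset.univ k0]
    simp [hk0, Nat.mod_add_mod, Nat.add_assoc]
    rw [Nat.add_comm 1 a]

lemma Epauli_apply (r : ZMod q × ZMod q) (i j : Fin q) :
    Epauli q r i j =
      (if (i : ℕ) = ((j : ℕ) + r.1.val) % q then 1 else 0) * zeta q ^ ((j : ℕ) * r.2.val) := by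
  rw [Epauli, Zmat, Matrix.diagonal_pow, Matrix.mul_diagonal, Xpow_apply]
  simp [Pi.pow_apply, ← pow_mul]

lemma Epauli_zero : Epauli q 0 = 1 := by
  simp [Epauli, ZMod.val_zero]

lemma zeta_conj_mul : conj (zeta q) * zeta q = 1 := by
  rw [← Complex.exp_conj, ← Complex.exp_add]
  have : conj (2 * (Real.pi : ℂ) * Complex.I / (q : ℂ)) = -(2 * (Real.pi : ℂ) * Complex.I / (q : ℂ)) := by
    simp [map_div₀, Complex.conj_I, Complex.conj_ofNat]
    ring
  rw [this, neg_add_cancel, Complex.exp_zero]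

lemma cond_iff (i j : Fin q) (a : ZMod q) :
    ((i : ℕ) = ((j : ℕ) + a.val) % q) ↔ a = ((i : ℕ) : ZMod q) - ((j : ℕ) : ZMod q) := by
  constructor
  · intro h
    have h2 := congrArg (fun m : ℕ => (m : ZMod q)) h
    simp only [ZMod.natCast_mod, Nat.cast_add] at h2
    rw [ZMod.natCast_rightInverse a] at h2
    rw [eq_sub_iff_add_eq, add_comm, ← h2]
  · intro h
    have h2 : ((j : ℕ) : ZMod q) + a = ((i : ℕ) : ZMod q) := by rw [h]; ring
    have h3 := congrArg ZMod.val h2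
    rw [ZMod.val_add, ZMod.val_cast_of_lt i.isLt, ZMod.val_cast_of_lt j.isLt] at h3
    omega

lemma zmod_sum_val (h : ℕ → ℂ) : ∑ b : ZMod q, h b.val = ∑ k ∈ Finset.range q, h k := by
  refine Finset.sum_nbij' (fun b => b.val) (fun k => (k : ZMod q)) ?_ ?_ ?_ ?_ ?_
  · intro a _; exact Finset.mem_range.mpr (ZMod.val_lt a)
  · intro k _; exact Finset.mem_univ _
  · intro a _; exact ZMod.natCast_rightInverse a
  · intro k hk; exact ZMod.val_cast_of_lt (Finset.mem_range.mp hk)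
  · intro a _; rfl

lemma geom_zeta (w y : Fin q) :
    ∑ b : ZMod q, conj (zeta q) ^ ((w : ℕ) * b.val) * zeta q ^ ((y : ℕ) * b.val)
      = if w = y then (q : ℂ) else 0 := by
  set ω := conj (zeta q) ^ (w : ℕ) * zeta q ^ (y : ℕ) with hω
  have hterm : ∀ b : ZMod q,
      conj (zeta q) ^ ((w : ℕ) * b.val) * zeta q ^ ((y : ℕ) * b.val) = ω ^ b.val := by
    intro b; rw [hω, mul_pow, ← pow_mul, ← pow_mul]
  rw [Finset.sum_congr rfl (fun b _ => hterm b), zmod_sum_val q (fun k => ω ^ k)]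
  by_cases hwy : w = y
  · subst hwy
    have : ω = 1 := by rw [hω, ← mul_pow, zeta_conj_mul, one_pow]
    simp [this]
  · have hprim := Complex.isPrimitiveRoot_exp q (NeZero.ne q)
    have hinv : conj (zeta q) = (zeta q)⁻¹ := eq_inv_of_mul_eq_one_left (zeta_conj_mul q)
    have hω1 : ω ≠ 1 := by
      intro h1
      have hzne : zeta q ≠ 0 := Complex.exp_ne_zero _
      have : zeta q ^ (y : ℕ) = zeta q ^ (w : ℕ) := by
        rw [hω, hinv, inv_pow] at h1
        field_simp at h1
        rw [h1]
      exact hwy (Fin.ext (hprim.pow_inj w.isLt y.isLt this.symm))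
    have hz : zeta q ^ q = 1 := hprim.pow_eq_one
    have hc : conj (zeta q) ^ q = 1 := by rw [← map_pow]; rw [hz]; exact map_one _
    have hωq : ω ^ q = 1 := by
      rw [hω, mul_pow, ← pow_mul, ← pow_mul, mul_comm (w : ℕ) q, mul_comm (y : ℕ) q,
        pow_mul, pow_mul, hc, hz, one_pow, one_pow, one_mul]
    rw [geom_sum_eq hω1 q, hωq, sub_self, zero_div, if_neg hwy]

lemma pauli_complete (v w x y : Fin q) :
    ∑ r : ZMod q × ZMod q, conj (Epauli q r v w) * Epauli q r x y
      = if v = x ∧ w = y then (q : ℂ) else 0 := by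
  rw [Fintype.sum_prod_type]
  have hterm : ∀ a b : ZMod q, conj (Epauli q (a, b) v w) * Epauli q (a, b) x y
      = ((if (v : ℕ) = ((w : ℕ) + a.val) % q then (1:ℂ) else 0) *
          (if (x : ℕ) = ((y : ℕ) + a.val) % q then (1:ℂ) else 0))
        * (conj (zeta q) ^ ((w : ℕ) * b.val) * zeta q ^ ((y : ℕ) * b.val)) := by
    intro a b
    rw [Epauli_apply, Epauli_apply]
    simp only [_root_.map_mul, _root_.map_pow, apply_ite (starRingEnd ℂ), _root_.map_one, _root_.map_zero]
    ring
  simp_rw [hterm]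
  rw [← Finset.sum_mul_sum, geom_zeta]
  by_cases hwy : w = y
  · subst hwy
    have hA : ∑ a : ZMod q, ((if (v : ℕ) = ((w : ℕ) + a.val) % q then (1:ℂ) else 0) *
        (if (x : ℕ) = ((w : ℕ) + a.val) % q then (1:ℂ) else 0)) = if v = x then 1 else 0 := by
      simp_rw [cond_iff]
      simp only [ite_mul, one_mul, zero_mul]
      rw [Finset.sum_ite_eq' Finset.univ]
      simp only [Finset.mem_univ, if_true]
      by_cases hvx : v = x
      · subst hvx; simp
      · have : ¬ (((v : ℕ) : ZMod q) - ((w : ℕ) : ZMod q) = ((x : ℕ) : ZMod q) - ((w : ℕ) : ZMod q)) := by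
          intro h
          apply hvx
          have h2 := sub_left_inj.mp h
          have := congrArg ZMod.val h2
          rw [ZMod.val_cast_of_lt v.isLt, ZMod.val_cast_of_lt x.isLt] at this
          exact Fin.ext this
        simp [this, hvx]
    rw [hA]
    by_cases hvx : v = x <;> simp [hvx]
  · simp [hwy]

def siteKer (q : ℕ) (full : Prop) [Decidable full] (v w x y : Fin q) : ℂ :=
  if full then (if v = x ∧ w = y then (q : ℂ) else 0)
  else (if v = w then 1 else 0) * (if x = y then 1 else 0)

lemma siteKer_eq_sum (full : Prop) [Decidable full] (v w x y : Fin q) :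
    ∑ r ∈ (if full then (Finset.univ : Finset (ZMod q × ZMod q)) else {0}),
      conj (Epauli q r v w) * Epauli q r x y = siteKer q full v w x y := by
  by_cases h : full
  · simp only [if_pos h, siteKer]
    exact pauli_complete q v w x y
  · simp only [if_neg h, siteKer, Finset.sum_singleton, Epauli_zero]
    simp [Matrix.one_apply, apply_ite (starRingEnd ℂ)]

lemma unit_col {U : Matrix (Fin q) (Fin q) ℂ} (hU : U ∈ Matrix.unitaryGroup (Fin q) ℂ)
    (c c' : Fin q) : ∑ v : Fin q, conj (U v c) * U v c' = if c = c' then 1 else 0 := by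
  have h : star U * U = 1 := hU.1
  have h2 := congrFun (congrFun h c) c'
  simpa [Matrix.mul_apply, Matrix.star_eq_conjTranspose, Matrix.conjTranspose_apply,
    Matrix.one_apply] using h2

lemma siteKer_repro {U : Matrix (Fin q) (Fin q) ℂ} (hU : U ∈ Matrix.unitaryGroup (Fin q) ℂ)
    (full : Prop) [Decidable full] (v' w' x' y' : Fin q) :
    ∑ a : Fin q, ∑ b : Fin q, ∑ c : Fin q, ∑ d : Fin q,
      U a v' * conj (U b w') * conj (U c x') * U d y' * siteKer q full a b c d
      = siteKer q full v' w' x' y' := by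
  by_cases h : full
  · simp only [siteKer, if_pos h]
    have step1 : ∀ a b : Fin q, ∑ c : Fin q, ∑ d : Fin q,
        U a v' * conj (U b w') * conj (U c x') * U d y' * (if a = c ∧ b = d then (q:ℂ) else 0)
        = (conj (U a x') * U a v') * ((conj (U b w') * U b y') * q) := by
      intro a b
      rw [Finset.sum_eq_single a]
      · rw [Finset.sum_eq_single b]
        · rw [if_pos ⟨rfl, rfl⟩]; ring
        · intro d _ hd; rw [if_neg (fun hh => hd hh.2.symm), mul_zero]
        · intro hb; exact absurd (Finset.mem_univ b) hb
      · intro c _ hc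
        apply Finset.sum_eq_zero; intro d _
        rw [if_neg (fun hh => hc hh.1.symm), mul_zero]
      · intro ha; exact absurd (Finset.mem_univ a) ha
    calc ∑ a : Fin q, ∑ b : Fin q, ∑ c : Fin q, ∑ d : Fin q,
          U a v' * conj (U b w') * conj (U c x') * U d y' * (if a = c ∧ b = d then (q:ℂ) else 0)
        = ∑ a : Fin q, ∑ b : Fin q, (conj (U a x') * U a v') * ((conj (U b w') * U b y') * q) := by
          exact Finset.sum_congr rfl fun a _ => Finset.sum_congr rfl fun b _ => step1 a b
      _ = (∑ a : Fin q, conj (U a x') * U a v') * ((∑ b : Fin q, conj (U b w') * U b y') * q) := by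
          rw [Finset.sum_mul]
          refine Finset.sum_congr rfl fun a _ => ?_
          rw [← Finset.mul_sum, ← Finset.sum_mul]
      _ = (if v' = x' ∧ w' = y' then (q:ℂ) else 0) := by
          rw [unit_col q hU x' v', unit_col q hU w' y']
          by_cases h1 : v' = x' <;> by_cases h2 : w' = y' <;>
            simp [h1, h2, eq_comm] <;> tauto
  · simp only [siteKer, if_neg h]
    have step1 : ∀ a b c : Fin q, ∑ d : Fin q,
        U a v' * conj (U b w') * conj (U c x') * U d y' *
          ((if a = b then (1:ℂ) else 0) * (if c = d then (1:ℂ) else 0))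
        = U a v' * conj (U b w') * (conj (U c x') * U c y') * (if a = b then (1:ℂ) else 0) := by
      intro a b c
      rw [Finset.sum_eq_single c]
      · rw [if_pos rfl]; ring
      · intro d _ hd
        rw [if_neg (show ¬ c = d from fun hh => hd hh.symm), mul_zero, mul_zero]
      · intro hc; exact absurd (Finset.mem_univ c) hc
    have step2 : ∀ a : Fin q, ∑ b : Fin q, ∑ c : Fin q,
        U a v' * conj (U b w') * (conj (U c x') * U c y') * (if a = b then (1:ℂ) else 0)
        = (conj (U a w') * U a v') * ∑ c : Fin q, conj (U c x') * U c y' := by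
      intro a
      rw [Finset.sum_eq_single a]
      · rw [Finset.mul_sum]
        refine Finset.sum_congr rfl fun c _ => ?_
        rw [if_pos rfl]; ring
      · intro b _ hb
        apply Finset.sum_eq_zero; intro c _
        rw [if_neg (fun hh => hb hh.symm), mul_zero]
      · intro ha; exact absurd (Finset.mem_univ a) ha
    calc ∑ a : Fin q, ∑ b : Fin q, ∑ c : Fin q, ∑ d : Fin q,
          U a v' * conj (U b w') * conj (U c x') * U d y' *
            ((if a = b then (1:ℂ) else 0) * (if c = d then (1:ℂ) else 0))
        = ∑ a : Fin q, (conj (U a w') * U a v') * ∑ c : Fin q, conj (U c x') * U c y' := by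
          refine Finset.sum_congr rfl fun a _ => ?_
          rw [← step2 a]
          exact Finset.sum_congr rfl fun b _ => Finset.sum_congr rfl fun c _ => step1 a b c
      _ = (∑ a : Fin q, conj (U a w') * U a v') * ∑ c : Fin q, conj (U c x') * U c y' := by
          rw [Finset.sum_mul]
      _ = (if v' = w' then (1:ℂ) else 0) * (if x' = y' then (1:ℂ) else 0) := by
          rw [unit_col q hU w' v', unit_col q hU x' y']
          by_cases h1 : v' = w' <;> simp [h1, eq_comm]

end Site

section Glob
set_option linter.unusedSectionVars false
variable (q : ℕ) [NeZero q] {ι : Type} [Fintype ι] [DecidableEq ι]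

def bigKer (S : Finset ι) (v w x y : ι → Fin q) : ℂ :=
  ∏ j, siteKer q (j ∈ S) (v j) (w j) (x j) (y j)

def tset (S : Finset ι) : ι → Finset (ZMod q × ZMod q) :=
  fun j => if j ∈ S then Finset.univ else {0}

def tfun (M₁ M₂ : Matrix (ι → Fin q) (ι → Fin q) ℂ) (p : ι → ZMod q × ZMod q) : ℂ :=
  Matrix.trace ((EV q p)ᴴ * M₁) * Matrix.trace (EV q p * M₂)

def Fsum (M₁ M₂ : Matrix (ι → Fin q) (ι → Fin q) ℂ) (S : Finset ι) : ℂ :=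
  ∑ p ∈ Fintype.piFinset (tset q S), tfun q M₁ M₂ p

lemma EV_sum (S : Finset ι) (a b e f : ι → Fin q) :
    ∑ p ∈ Fintype.piFinset (tset q S), conj (EV q p a b) * EV q p e f
      = bigKer q S a b e f := by
  have hterm : ∀ p : ι → ZMod q × ZMod q, conj (EV q p a b) * EV q p e f
      = ∏ j, (conj (Epauli q (p j) (a j) (b j)) * Epauli q (p j) (e j) (f j)) := by
    intro p
    rw [show conj (EV q p a b) = ∏ j, conj (Epauli q (p j) (a j) (b j)) from
      map_prod (starRingEnd ℂ) _ _]
    simp only [EV]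
    rw [← Finset.prod_mul_distrib]
  simp_rw [hterm]
  refine ((Finset.prod_univ_sum (tset q S)
    (fun j r => conj (Epauli q r (a j) (b j)) * Epauli q r (e j) (f j))).symm).trans ?_
  simp only [tset, bigKer]
  exact Finset.prod_congr rfl fun j _ => siteKer_eq_sum q (j ∈ S) _ _ _ _


lemma step1 (M₁ M₂ : Matrix (ι → Fin q) (ι → Fin q) ℂ) (S : Finset ι) :
    Fsum q M₁ M₂ S = ∑ c : (ι → Fin q) × (ι → Fin q), ∑ d : (ι → Fin q) × (ι → Fin q),
      M₁ c.1 c.2 * M₂ d.2 d.1 * bigKer q S c.1 c.2 d.1 d.2 := by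
  have htr1 : ∀ p : ι → ZMod q × ZMod q, Matrix.trace ((EV q p)ᴴ * M₁)
      = ∑ c : (ι → Fin q) × (ι → Fin q), conj (EV q p c.1 c.2) * M₁ c.1 c.2 := by
    intro p
    rw [Matrix.trace, Fintype.sum_prod_type]
    unfold Matrix.diag
    simp_rw [Matrix.mul_apply, Matrix.conjTranspose_apply]
    exact Finset.sum_comm
  have htr2 : ∀ p : ι → ZMod q × ZMod q, Matrix.trace (EV q p * M₂)
      = ∑ d : (ι → Fin q) × (ι → Fin q), EV q p d.1 d.2 * M₂ d.2 d.1 := by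
    intro p
    rw [Matrix.trace, Fintype.sum_prod_type]
    unfold Matrix.diag
    simp_rw [Matrix.mul_apply]
  calc Fsum q M₁ M₂ S
      = ∑ p ∈ Fintype.piFinset (tset q S), ∑ c : (ι → Fin q) × (ι → Fin q),
          ∑ d : (ι → Fin q) × (ι → Fin q),
          (conj (EV q p c.1 c.2) * M₁ c.1 c.2) * (EV q p d.1 d.2 * M₂ d.2 d.1) := by
        refine Finset.sum_congr rfl fun p _ => ?_
        rw [tfun, htr1 p, htr2 p, Finset.sum_mul_sum]
    _ = ∑ c : (ι → Fin q) × (ι → Fin q), ∑ d : (ι → Fin q) × (ι → Fin q),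
          ∑ p ∈ Fintype.piFinset (tset q S),
          (conj (EV q p c.1 c.2) * M₁ c.1 c.2) * (EV q p d.1 d.2 * M₂ d.2 d.1) := by
        rw [Finset.sum_comm]
        exact Finset.sum_congr rfl fun c _ => Finset.sum_comm
    _ = ∑ c : (ι → Fin q) × (ι → Fin q), ∑ d : (ι → Fin q) × (ι → Fin q),
          M₁ c.1 c.2 * M₂ d.2 d.1 * bigKer q S c.1 c.2 d.1 d.2 := by
        refine Finset.sum_congr rfl fun c _ => Finset.sum_congr rfl fun d _ => ?_
        rw [← EV_sum q S c.1 c.2 d.1 d.2, Finset.mul_sum]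
        exact Finset.sum_congr rfl fun p _ => by ring

lemma kron_repro (Us : ι → Matrix (Fin q) (Fin q) ℂ)
    (hU : ∀ j, Us j ∈ Matrix.unitaryGroup (Fin q) ℂ)
    (S : Finset ι) (v' w' x' y' : ι → Fin q) :
    ∑ v : ι → Fin q, ∑ w : ι → Fin q, ∑ x : ι → Fin q, ∑ y : ι → Fin q,
      kron q Us v v' * conj (kron q Us w w') * conj (kron q Us x x') * kron q Us y y' *
        bigKer q S v w x y
      = bigKer q S v' w' x' y' := by
  have hsum : ∀ g : ι → Fin q → ℂ, ∑ y : ι → Fin q, ∏ j, g j (y j) = ∏ j, ∑ t : Fin q, g j t := by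
    intro g
    have h := Finset.prod_univ_sum (fun _ : ι => (Finset.univ : Finset (Fin q))) g
    rw [Fintype.piFinset_univ] at h
    exact h.symm
  set F : ι → Fin q → Fin q → Fin q → Fin q → ℂ := fun j a b c d =>
    Us j a (v' j) * conj (Us j b (w' j)) * conj (Us j c (x' j)) * Us j d (y' j) *
      siteKer q (j ∈ S) a b c d with hF
  have hsummand : ∀ v w x y : ι → Fin q,
      kron q Us v v' * conj (kron q Us w w') * conj (kron q Us x x') * kron q Us y y' *
        bigKer q S v w x y
      = ∏ j, F j (v j) (w j) (x j) (y j) := by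
    intro v w x y
    rw [show conj (kron q Us w w') = ∏ j, conj (Us j (w j) (w' j)) from
        map_prod (starRingEnd ℂ) _ _,
      show conj (kron q Us x x') = ∏ j, conj (Us j (x j) (x' j)) from
        map_prod (starRingEnd ℂ) _ _]
    simp only [kron, bigKer, hF]
    rw [← Finset.prod_mul_distrib, ← Finset.prod_mul_distrib, ← Finset.prod_mul_distrib,
      ← Finset.prod_mul_distrib]
  simp_rw [hsummand]
  calc ∑ v : ι → Fin q, ∑ w : ι → Fin q, ∑ x : ι → Fin q, ∑ y : ι → Fin q,
        ∏ j, F j (v j) (w j) (x j) (y j)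
      = ∑ v : ι → Fin q, ∑ w : ι → Fin q, ∑ x : ι → Fin q,
          ∏ j, ∑ d : Fin q, F j (v j) (w j) (x j) d := by
        refine Finset.sum_congr rfl fun v _ => Finset.sum_congr rfl fun w _ =>
          Finset.sum_congr rfl fun x _ => ?_
        exact hsum fun j d => F j (v j) (w j) (x j) d
    _ = ∑ v : ι → Fin q, ∑ w : ι → Fin q,
          ∏ j, ∑ c : Fin q, ∑ d : Fin q, F j (v j) (w j) c d := by
        refine Finset.sum_congr rfl fun v _ => Finset.sum_congr rfl fun w _ => ?_
        exact hsum fun j c => ∑ d : Fin q, F j (v j) (w j) c d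
    _ = ∑ v : ι → Fin q, ∏ j, ∑ b : Fin q, ∑ c : Fin q, ∑ d : Fin q, F j (v j) b c d := by
        refine Finset.sum_congr rfl fun v _ => ?_
        exact hsum fun j b => ∑ c : Fin q, ∑ d : Fin q, F j (v j) b c d
    _ = ∏ j, ∑ a : Fin q, ∑ b : Fin q, ∑ c : Fin q, ∑ d : Fin q, F j a b c d :=
        hsum fun j a => ∑ b : Fin q, ∑ c : Fin q, ∑ d : Fin q, F j a b c d
    _ = bigKer q S v' w' x' y' := by
        simp only [bigKer]
        exact Finset.prod_congr rfl fun j _ => siteKer_repro q (hU j) (j ∈ S) _ _ _ _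

lemma conj_entry (K M : Matrix (ι → Fin q) (ι → Fin q) ℂ) (a b : ι → Fin q) :
    (K * M * Kᴴ) a b = ∑ e : (ι → Fin q) × (ι → Fin q), K a e.1 * M e.1 e.2 * conj (K b e.2) := by
  rw [Matrix.mul_apply]
  simp_rw [Matrix.mul_apply, Matrix.conjTranspose_apply, Finset.sum_mul]
  rw [Fintype.sum_prod_type]
  exact Finset.sum_comm


lemma Fsum_inv (Us : ι → Matrix (Fin q) (Fin q) ℂ)
    (hU : ∀ j, Us j ∈ Matrix.unitaryGroup (Fin q) ℂ)
    (M₁ M₂ : Matrix (ι → Fin q) (ι → Fin q) ℂ) (S : Finset ι) :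
    Fsum q (kron q Us * M₁ * (kron q Us)ᴴ) (kron q Us * M₂ * (kron q Us)ᴴ) S
      = Fsum q M₁ M₂ S := by
  rw [step1, step1]
  have inner : ∀ e f : (ι → Fin q) × (ι → Fin q),
      ∑ c : (ι → Fin q) × (ι → Fin q), ∑ d : (ι → Fin q) × (ι → Fin q),
        kron q Us c.1 e.1 * conj (kron q Us c.2 e.2) * conj (kron q Us d.1 f.2) *
          kron q Us d.2 f.1 * bigKer q S c.1 c.2 d.1 d.2
      = bigKer q S e.1 e.2 f.2 f.1 := by
    intro e f
    rw [Fintype.sum_prod_type]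
    simp_rw [Fintype.sum_prod_type]
    exact kron_repro q Us hU S e.1 e.2 f.2 f.1
  calc ∑ c : (ι → Fin q) × (ι → Fin q), ∑ d : (ι → Fin q) × (ι → Fin q),
        (kron q Us * M₁ * (kron q Us)ᴴ) c.1 c.2 * (kron q Us * M₂ * (kron q Us)ᴴ) d.2 d.1 *
          bigKer q S c.1 c.2 d.1 d.2
      = ∑ c : (ι → Fin q) × (ι → Fin q), ∑ d : (ι → Fin q) × (ι → Fin q),
          ∑ e : (ι → Fin q) × (ι → Fin q), ∑ f : (ι → Fin q) × (ι → Fin q),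
          (kron q Us c.1 e.1 * M₁ e.1 e.2 * conj (kron q Us c.2 e.2)) *
            (kron q Us d.2 f.1 * M₂ f.1 f.2 * conj (kron q Us d.1 f.2)) *
            bigKer q S c.1 c.2 d.1 d.2 := by
        refine Finset.sum_congr rfl fun c _ => Finset.sum_congr rfl fun d _ => ?_
        rw [conj_entry, conj_entry, Finset.sum_mul_sum]
        simp_rw [Finset.sum_mul]
    _ = ∑ e : (ι → Fin q) × (ι → Fin q), ∑ f : (ι → Fin q) × (ι → Fin q),
          ∑ c : (ι → Fin q) × (ι → Fin q), ∑ d : (ι → Fin q) × (ι → Fin q),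
          (kron q Us c.1 e.1 * M₁ e.1 e.2 * conj (kron q Us c.2 e.2)) *
            (kron q Us d.2 f.1 * M₂ f.1 f.2 * conj (kron q Us d.1 f.2)) *
            bigKer q S c.1 c.2 d.1 d.2 := by
        calc ∑ c : (ι → Fin q) × (ι → Fin q), ∑ d : (ι → Fin q) × (ι → Fin q),
              ∑ e : (ι → Fin q) × (ι → Fin q), ∑ f : (ι → Fin q) × (ι → Fin q),
              (kron q Us c.1 e.1 * M₁ e.1 e.2 * conj (kron q Us c.2 e.2)) *
                (kron q Us d.2 f.1 * M₂ f.1 f.2 * conj (kron q Us d.1 f.2)) *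
                bigKer q S c.1 c.2 d.1 d.2
            = ∑ c : (ι → Fin q) × (ι → Fin q), ∑ e : (ι → Fin q) × (ι → Fin q),
              ∑ d : (ι → Fin q) × (ι → Fin q), ∑ f : (ι → Fin q) × (ι → Fin q), _ :=
              Finset.sum_congr rfl fun c _ => Finset.sum_comm
          _ = ∑ e : (ι → Fin q) × (ι → Fin q), ∑ c : (ι → Fin q) × (ι → Fin q),
              ∑ d : (ι → Fin q) × (ι → Fin q), ∑ f : (ι → Fin q) × (ι → Fin q), _ :=
              Finset.sum_comm
          _ = ∑ e : (ι → Fin q) × (ι → Fin q), ∑ c : (ι → Fin q) × (ι → Fin q),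
              ∑ f : (ι → Fin q) × (ι → Fin q), ∑ d : (ι → Fin q) × (ι → Fin q), _ :=
              Finset.sum_congr rfl fun e _ => Finset.sum_congr rfl fun c _ => Finset.sum_comm
          _ = ∑ e : (ι → Fin q) × (ι → Fin q), ∑ f : (ι → Fin q) × (ι → Fin q),
              ∑ c : (ι → Fin q) × (ι → Fin q), ∑ d : (ι → Fin q) × (ι → Fin q), _ :=
              Finset.sum_congr rfl fun e _ => Finset.sum_comm
    _ = ∑ e : (ι → Fin q) × (ι → Fin q), ∑ f : (ι → Fin q) × (ι → Fin q),
          M₁ e.1 e.2 * M₂ f.1 f.2 * bigKer q S e.1 e.2 f.2 f.1 := by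
        refine Finset.sum_congr rfl fun e _ => Finset.sum_congr rfl fun f _ => ?_
        rw [← inner e f, Finset.mul_sum]
        refine Finset.sum_congr rfl fun c _ => ?_
        rw [Finset.mul_sum]
        exact Finset.sum_congr rfl fun d _ => by ring
    _ = ∑ c : (ι → Fin q) × (ι → Fin q), ∑ d : (ι → Fin q) × (ι → Fin q),
          M₁ c.1 c.2 * M₂ d.2 d.1 * bigKer q S c.1 c.2 d.1 d.2 := by
        refine Finset.sum_congr rfl fun e _ => ?_
        exact Fintype.sum_equiv (Equiv.prodComm _ _) _ _ fun f => rfl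

lemma mem_piFinset_tset (S : Finset ι) (p : ι → ZMod q × ZMod q) :
    p ∈ Fintype.piFinset (tset q S) ↔ (Finset.univ.filter fun j => p j ≠ 0) ⊆ S := by
  simp only [Fintype.mem_piFinset, tset]
  constructor
  · intro h j hj
    rcases Finset.mem_filter.mp hj with ⟨-, hne⟩
    by_contra hjS
    have h2 := h j
    rw [if_neg hjS] at h2
    exact hne (Finset.mem_singleton.mp h2)
  · intro h j
    by_cases hj : j ∈ S
    · rw [if_pos hj]; exact Finset.mem_univ _
    · rw [if_neg hj, Finset.mem_singleton]
      by_contra hne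
      exact hj (h (Finset.mem_filter.mpr ⟨Finset.mem_univ _, hne⟩))

def Gsum (M₁ M₂ : Matrix (ι → Fin q) (ι → Fin q) ℂ) (S : Finset ι) : ℂ :=
  ∑ p ∈ Finset.univ.filter (fun p : ι → ZMod q × ZMod q =>
      (Finset.univ.filter fun j => p j ≠ 0) = S), tfun q M₁ M₂ p

lemma Fsum_eq_sum_Gsum (M₁ M₂ : Matrix (ι → Fin q) (ι → Fin q) ℂ) (S : Finset ι) :
    Fsum q M₁ M₂ S = ∑ S' ∈ S.powerset, Gsum q M₁ M₂ S' := by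
  rw [Fsum]
  rw [← Finset.sum_fiberwise_of_maps_to (t := S.powerset)
      (g := fun p : ι → ZMod q × ZMod q => Finset.univ.filter fun j => p j ≠ 0)
      (fun p hp => Finset.mem_powerset.mpr ((mem_piFinset_tset q S p).mp hp))
      (tfun q M₁ M₂)]
  refine Finset.sum_congr rfl fun S' hS' => ?_
  refine Finset.sum_congr ?_ fun _ _ => rfl
  ext p
  simp only [Finset.mem_filter]
  constructor
  · rintro ⟨hp, hD⟩; exact ⟨Finset.mem_univ _, hD⟩
  · rintro ⟨-, hD⟩
    exact ⟨(mem_piFinset_tset q S p).mpr (hD ▸ Finset.mem_powerset.mp hS'), hD⟩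

lemma Gsum_inv (M₁ M₂ N₁ N₂ : Matrix (ι → Fin q) (ι → Fin q) ℂ)
    (hF : ∀ S : Finset ι, Fsum q N₁ N₂ S = Fsum q M₁ M₂ S) :
    ∀ S : Finset ι, Gsum q N₁ N₂ S = Gsum q M₁ M₂ S := by
  intro S
  induction S using Finset.strongInduction with
  | _ S ih =>
    have e : ∀ P₁ P₂ : Matrix (ι → Fin q) (ι → Fin q) ℂ, Gsum q P₁ P₂ S
        = Fsum q P₁ P₂ S - ∑ S' ∈ S.powerset.erase S, Gsum q P₁ P₂ S' := by
      intro P₁ P₂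
      rw [Fsum_eq_sum_Gsum, ← Finset.add_sum_erase _ _ (Finset.mem_powerset_self S)]
      ring
    rw [e, e, hF S]
    congr 1
    refine Finset.sum_congr rfl fun S' hS' => ?_
    rcases Finset.mem_erase.mp hS' with ⟨hne, hmem⟩
    exact ih S' (Finset.ssubset_iff_subset_ne.mpr ⟨Finset.mem_powerset.mp hmem, hne⟩)

lemma enumA_eq (M₁ M₂ : Matrix (ι → Fin q) (ι → Fin q) ℂ) :
    enumA q M₁ M₂ = ∑ S : Finset ι, Polynomial.C (Gsum q M₁ M₂ S) * Polynomial.X ^ S.card := by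
  rw [enumA]
  rw [← Finset.sum_fiberwise_of_maps_to (t := (Finset.univ : Finset (Finset ι)))
      (g := fun p : ι → ZMod q × ZMod q => Finset.univ.filter fun j => p j ≠ 0)
      (fun p _ => Finset.mem_univ _)
      (fun p => Polynomial.C (Matrix.trace ((EV q p)ᴴ * M₁) * Matrix.trace (EV q p * M₂)) *
        Polynomial.X ^ wtL q p)]
  refine Finset.sum_congr rfl fun S _ => ?_
  rw [Gsum, map_sum, Finset.sum_mul]
  refine Finset.sum_congr rfl fun p hp => ?_
  have hw : wtL q p = S.card := by rw [wtL, (Finset.mem_filter.mp hp).2]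
  rw [hw, tfun]

end Glob

/-- Local unitary invariance of the Shor–Laflamme `A`-enumerator. -/
theorem stmt1 (q n : ℕ) [NeZero q] (hq : 2 ≤ q) (hn : 1 ≤ n)
    (M₁ M₂ : Matrix ((Fin n) → Fin q) ((Fin n) → Fin q) ℂ)
    (hM₁ : M₁.IsHermitian) (hM₂ : M₂.IsHermitian)
    (Us : Fin n → Matrix (Fin q) (Fin q) ℂ)
    (hU : ∀ j, Us j ∈ Matrix.unitaryGroup (Fin q) ℂ) :
    enumA q (kron q Us * M₁ * (kron q Us)ᴴ) (kron q Us * M₂ * (kron q Us)ᴴ) =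
      enumA q M₁ M₂ := by
  rw [enumA_eq, enumA_eq]
  refine Finset.sum_congr rfl fun S _ => ?_
  rw [Gsum_inv q M₁ M₂ _ _ (fun S => Fsum_inv q Us hU M₁ M₂ S) S]
end
end

section
/- General quantum MacWilliams theorem: let M₁, M₂ be Hermitian q^n×q^n complex matrices, let k ≥ 1, and for each j ∈ {1,…,n} let wtⱼ : (ℤ/qℤ)² × (ℤ/qℤ)² → Option (Fin k → ℕ) be a weight function. Suppose Φ : (Fin k → ℂ) → (Fin k → ℂ) satisfies: for every j, every pair of single-qudit labels d, d' ∈ (ℤ/qℤ)², and every u : Fin k → ℂ, (Φu)^{wtⱼ(d,d')} = q^{−2} Σ_{e,e' ∈ (ℤ/qℤ)²} Tr(E(e)† E(d) E(e') E(d')†) · u^{wtⱼ(e,e')}. Then for every u : Fin k → ℂ, Σ_{p,p' ∈ ((ℤ/qℤ)²)ⁿ} Tr(E(p)† M₁ E(p') M₂) · ∏ⱼ u^{wtⱼ(pⱼ,p'ⱼ)} = Σ_{p,p' ∈ ((ℤ/qℤ)²)ⁿ} Tr(E(p)† M₁) Tr(E(p') M₂) · ∏ⱼ (Φu)^{wtⱼ(pⱼ,p'ⱼ)}.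 -/
open Matrix Polynomial
open scoped BigOperators ComplexConjugate Kronecker

noncomputable section

/-- Monomial `u^v` for `v : Option (Fin k → ℕ)`: the product `∏ᵢ u(i)^{t(i)}` when
`v = some t`, and `0` when `v = none` (`⊥`). -/
def mono {k : ℕ} (u : Fin k → ℂ) : Option (Fin k → ℕ) → ℂ
  | Option.none => 0
  | Option.some t => ∏ i, u i ^ t i

/-!
The generalized Pauli matrices form a tight frame for the Hilbert–Schmidt inner product:
`∑ p, tr (E(p)ᴴ M) • E(p) = q ^ n • M`. On one qudit this is orthogonality of the characters of
`ZMod q`, and the relation passes to tensor products. Since the trace of a tensor product is the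
product of the traces, the hypothesis on `Φ` turns each `∏ j, (Φ u)^{wt_j(p_j, p'_j)}` on the right
into `q^{-2n} ∑_{e,e'} tr (E(e)ᴴ E(p) E(e') E(p')ᴴ) ∏ j, u^{wt_j(e_j, e'_j)}`. Summing over `p, p'`
first, the frame relation reassembles `M₁` and `M₂`, leaving the left-hand side.
-/

open Finset

namespace Finset

lemma sum_sum_sum_sum_comm {α β M : Type*} [Fintype α] [Fintype β] [AddCommMonoid M]
    (f : α → α → β → β → M) :
    ∑ a, ∑ a', ∑ b, ∑ b', f a a' b b' = ∑ b, ∑ b', ∑ a, ∑ a', f a a' b b' := by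
  calc _ = ∑ a, ∑ b, ∑ b', ∑ a', f a a' b b' :=
        sum_congr rfl fun a _ => by rw [sum_comm]; exact sum_congr rfl fun b _ => sum_comm
    _ = _ := by rw [sum_comm]; exact sum_congr rfl fun b _ => sum_comm

lemma prod_univ_sum_sum {ι α β R : Type*} [Fintype ι] [DecidableEq ι] [Fintype α]
    [Fintype β] [CommSemiring R] (f : ι → α → β → R) :
    ∏ i, ∑ a, ∑ b, f i a b = ∑ x : ι → α, ∑ y : ι → β, ∏ i, f i (x i) (y i) := by
  rw [Fintype.prod_sum]
  exact sum_congr rfl fun x _ => Fintype.prod_sum fun i b => f i (x i) b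

end Finset

namespace Matrix

variable {ι m R : Type*} [Fintype ι]

def piKronecker [CommMonoid R] (A : ι → Matrix m m R) : Matrix (ι → m) (ι → m) R :=
  of fun v w => ∏ i, A i (v i) (w i)

@[simp]
lemma piKronecker_apply [CommMonoid R] (A : ι → Matrix m m R) (v w : ι → m) :
    piKronecker A v w = ∏ i, A i (v i) (w i) := rfl

variable [CommSemiring R]

lemma piKronecker_mul [Fintype m] [DecidableEq ι] (A B : ι → Matrix m m R) :
    piKronecker A * piKronecker B = piKronecker fun i => A i * B i := by
  ext v w
  simp only [mul_apply, piKronecker_apply, ← prod_mul_distrib]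
  exact (Fintype.prod_sum fun i j => A i (v i) j * B i j (w i)).symm

lemma conjTranspose_piKronecker [StarRing R] (A : ι → Matrix m m R) :
    (piKronecker A)ᴴ = piKronecker fun i => (A i)ᴴ := by
  ext v w
  simp [conjTranspose_apply, star_prod]

lemma trace_piKronecker [Fintype m] [DecidableEq ι] (A : ι → Matrix m m R) :
    (piKronecker A).trace = ∏ i, (A i).trace :=
  (Fintype.prod_sum fun i j => A i j j).symm

end Matrix

section TightFrame

variable {α ι m R : Type*} [Fintype α] [DecidableEq m] [CommSemiring R] [StarRing R]

/-- Entrywise form of `∑ a, ⟪E a, M⟫ • E a = c • M` for the Hilbert–Schmidt pairing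
`⟪A, M⟫ = trace (Aᴴ * M)`; see `IsTightFrame.sum_trace_conjTranspose_mul_smul`. -/
def IsTightFrame (E : α → Matrix m m R) (c : R) : Prop :=
  ∀ s t v w, ∑ a, star (E a s t) * E a v w = if s = v ∧ t = w then c else 0

namespace IsTightFrame

variable {E : α → Matrix m m R} {c : R}

lemma sum_trace_conjTranspose_mul_smul [Fintype m] (hE : IsTightFrame E c) (M : Matrix m m R) :
    ∑ a, ((E a)ᴴ * M).trace • E a = c • M := by
  ext v w
  calc (∑ a, ((E a)ᴴ * M).trace • E a) v w
      = ∑ t, ∑ s, M s t * ∑ a, star (E a s t) * E a v w := by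
        simp only [Matrix.sum_apply, Matrix.smul_apply, smul_eq_mul, Matrix.trace, Matrix.diag,
          Matrix.mul_apply, conjTranspose_apply, sum_mul, mul_sum]
        rw [sum_comm]
        refine sum_congr rfl fun t _ => ?_
        rw [sum_comm]
        exact sum_congr rfl fun s _ => sum_congr rfl fun a _ => by ring
    _ = (c • M) v w := by
        simp only [hE _ _ v w]
        simp [ite_and, mul_comm]

lemma sum_trace_mul_smul_conjTranspose [Fintype m] (hE : IsTightFrame E c) (M : Matrix m m R) :
    ∑ a, (E a * M).trace • (E a)ᴴ = c • M := by
  ext v w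
  calc (∑ a, (E a * M).trace • (E a)ᴴ) v w
      = ∑ s, ∑ t, M t s * ∑ a, star (E a w v) * E a s t := by
        simp only [Matrix.sum_apply, Matrix.smul_apply, smul_eq_mul, Matrix.trace, Matrix.diag,
          Matrix.mul_apply, conjTranspose_apply, sum_mul, mul_sum]
        rw [sum_comm]
        refine sum_congr rfl fun s _ => ?_
        rw [sum_comm]
        exact sum_congr rfl fun t _ => sum_congr rfl fun a _ => by ring
    _ = (c • M) v w := by
        simp only [hE w v]
        simp [ite_and, mul_comm]

lemma sum_sum_trace_mul [Fintype m] (hE : IsTightFrame E c) (A B M₁ M₂ : Matrix m m R) :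
    ∑ a, ∑ b, ((E a)ᴴ * M₁).trace * (E b * M₂).trace * (A * E a * B * (E b)ᴴ).trace =
      c ^ 2 * (A * M₁ * B * M₂).trace := by
  calc _ = (A * (∑ a, ((E a)ᴴ * M₁).trace • E a) * B *
        ∑ b, (E b * M₂).trace • (E b)ᴴ).trace := by
        simp only [mul_sum, sum_mul, Matrix.mul_smul, Matrix.smul_mul, trace_sum, trace_smul,
          smul_eq_mul, mul_assoc]
        rw [sum_comm]
        simp only [mul_left_comm]
    _ = _ := by
        rw [hE.sum_trace_conjTranspose_mul_smul, hE.sum_trace_mul_smul_conjTranspose]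
        simp only [Matrix.mul_smul, Matrix.smul_mul, trace_smul, smul_eq_mul]
        ring

lemma piKronecker [Fintype ι] [DecidableEq ι] (hE : IsTightFrame E c) :
    IsTightFrame (fun p : ι → α => Matrix.piKronecker fun i => E (p i))
      (c ^ Fintype.card ι) := by
  intro s t v w
  simp only [Matrix.piKronecker_apply, star_prod, ← prod_mul_distrib]
  rw [← Fintype.prod_sum fun i a => star (E a (s i) (t i)) * E a (v i) (w i),
    prod_congr rfl fun i _ => hE (s i) (t i) (v i) (w i), prod_ite_zero, prod_const, card_univ]
  simp only [mem_univ, forall_const, funext_iff, forall_and]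

end IsTightFrame

end TightFrame

section Pauli

lemma natCast_finVal_inj {q : ℕ} {s t : Fin q} : ((s : ℕ) : ZMod q) = (t : ℕ) ↔ s = t := by
  rw [ZMod.natCast_eq_natCast_iff', Nat.mod_eq_of_lt s.isLt, Nat.mod_eq_of_lt t.isLt, Fin.val_inj]

variable (q : ℕ) [NeZero q]

lemma Xmat_pow_apply (m : ℕ) (s t : Fin q) :
    (Xmat q ^ m) s t = if ((s : ℕ) : ZMod q) = (t : ℕ) + m then 1 else 0 := by
  induction m generalizing s t with
  | zero => simp [one_apply, natCast_finVal_inj]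
  | succ m ih =>
    let t₁ : Fin q := ⟨((t : ℕ) + 1) % q, Nat.mod_lt _ (NeZero.pos q)⟩
    have ht₁ : ((t₁ : ℕ) : ZMod q) = (t : ℕ) + 1 := by simp [t₁]
    have hX : ∀ x : Fin q, Xmat q x t = if x = t₁ then 1 else 0 := fun x => by
      simp [Xmat, t₁, Fin.ext_iff]
    rw [pow_succ, mul_apply, sum_eq_single t₁ (fun x _ hx => by rw [hX, if_neg hx, mul_zero])
      (by simp), hX, if_pos rfl, mul_one, ih, ht₁, Nat.cast_succ, add_comm (m : ZMod q),
      add_assoc]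

lemma zeta_pow_eq_stdAddChar (m : ℕ) :
    Complex.exp (2 * Real.pi * Complex.I / q) ^ m = ZMod.stdAddChar (m : ZMod q) := by
  rw [ZMod.stdAddChar_apply, ZMod.toCircle_natCast, ← Complex.exp_nat_mul]
  ring_nf

lemma Epauli_apply_s7 (p : ZMod q × ZMod q) (s t : Fin q) :
    Epauli q p s t =
      if ((s : ℕ) : ZMod q) = (t : ℕ) + p.1 then ZMod.stdAddChar (((t : ℕ) : ZMod q) * p.2)
      else 0 := by
  rw [Epauli, Zmat, diagonal_pow, mul_diagonal, Xmat_pow_apply, ZMod.natCast_zmod_val,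
    Pi.pow_apply, ← pow_mul, zeta_pow_eq_stdAddChar, ite_mul, one_mul, zero_mul]
  push_cast [ZMod.natCast_zmod_val]
  rfl

lemma sum_star_stdAddChar_mul (x y : ZMod q) :
    ∑ b : ZMod q, star (ZMod.stdAddChar (x * b)) * ZMod.stdAddChar (y * b) =
      if x = y then (q : ℂ) else 0 := by
  have hchar : 0 < ringChar (ZMod q) := (ZMod.ringChar_zmod_n q).symm ▸ NeZero.pos q
  have h : ∀ b, star (ZMod.stdAddChar (x * b)) * ZMod.stdAddChar (y * b) =
      ZMod.stdAddChar (b * (y - x)) := fun b => by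
    rw [Complex.star_def, AddChar.starComp_apply hchar, AddChar.inv_apply,
      ← AddChar.map_add_eq_mul]
    ring_nf
  simp_rw [h, AddChar.sum_mulShift _ (ZMod.isPrimitive_stdAddChar q), sub_eq_zero, ZMod.card,
    eq_comm]
  push_cast
  rfl

lemma isTightFrame_Epauli : IsTightFrame (Epauli q) (q : ℂ) := by
  intro s t v w
  simp only [Fintype.sum_prod_type, Epauli_apply_s7, apply_ite star, star_zero, ite_mul, mul_ite,
    zero_mul, mul_zero, sum_ite_irrel, sum_const_zero, sum_star_stdAddChar_mul, natCast_finVal_inj]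
  by_cases htw : t = w
  · subst htw
    have hx : ∀ x : ZMod q, ((v : ℕ) : ZMod q) = (t : ℕ) + x ↔ x = (v : ℕ) - (t : ℕ) :=
      fun x => by rw [eq_sub_iff_add_eq', eq_comm]
    simp only [hx, sum_ite_eq', mem_univ, if_true, add_sub_cancel, natCast_finVal_inj, and_true]
  · simp [htw]

end Pauli

section Multiqudit

lemma EV_eq_piKronecker (q : ℕ) {ι : Type} [Fintype ι] (p : ι → ZMod q × ZMod q) :
    EV q p = piKronecker fun i => Epauli q (p i) := rfl

variable (q : ℕ) [NeZero q] {ι : Type} [Fintype ι] [DecidableEq ι]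

lemma isTightFrame_EV : IsTightFrame (EV q (ι := ι)) ((q : ℂ) ^ Fintype.card ι) :=
  (isTightFrame_Epauli q).piKronecker

lemma prod_eq_sum_sum_trace_EV_mul_prod (f g : ι → ZMod q × ZMod q → ZMod q × ZMod q → ℂ)
    (hfg : ∀ j d d', f j d d' = ((q : ℂ) ^ 2)⁻¹ * ∑ e, ∑ e',
      ((Epauli q e)ᴴ * Epauli q d * Epauli q e' * (Epauli q d')ᴴ).trace * g j e e')
    (p p' : ι → ZMod q × ZMod q) :
    ∏ j, f j (p j) (p' j) = ((q : ℂ) ^ 2)⁻¹ ^ Fintype.card ι * ∑ e, ∑ e',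
      ((EV q e)ᴴ * EV q p * EV q e' * (EV q p')ᴴ).trace * ∏ j, g j (e j) (e' j) := by
  simp only [hfg, prod_mul_distrib, prod_const, card_univ, prod_univ_sum_sum, EV_eq_piKronecker,
    conjTranspose_piKronecker, piKronecker_mul, trace_piKronecker]

end Multiqudit

theorem stmt7_general (q n k : ℕ) [NeZero q]
    (M₁ M₂ : Matrix ((Fin n) → Fin q) ((Fin n) → Fin q) ℂ)
    (wtf : Fin n → (ZMod q × ZMod q) → (ZMod q × ZMod q) → Option (Fin k → ℕ))
    (Φ : (Fin k → ℂ) → (Fin k → ℂ))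
    (hΦ : ∀ (j : Fin n) (d d' : ZMod q × ZMod q) (u : Fin k → ℂ),
      mono (Φ u) (wtf j d d') =
        ((q : ℂ) ^ 2)⁻¹ * ∑ e : ZMod q × ZMod q, ∑ e' : ZMod q × ZMod q,
          Matrix.trace ((Epauli q e)ᴴ * Epauli q d * Epauli q e' * (Epauli q d')ᴴ) *
            mono u (wtf j e e')) (u : Fin k → ℂ) :
    (∑ p : Fin n → ZMod q × ZMod q, ∑ p' : Fin n → ZMod q × ZMod q,
        Matrix.trace ((EV q p)ᴴ * M₁ * EV q p' * M₂) *
          ∏ j, mono u (wtf j (p j) (p' j))) =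
      ∑ p : Fin n → ZMod q × ZMod q, ∑ p' : Fin n → ZMod q × ZMod q,
        Matrix.trace ((EV q p)ᴴ * M₁) * Matrix.trace (EV q p' * M₂) *
          ∏ j, mono (Φ u) (wtf j (p j) (p' j)) := by
  have hscale : ((q : ℂ) ^ 2)⁻¹ ^ n * ((q : ℂ) ^ n) ^ 2 = 1 := by
    rw [← pow_mul, mul_comm n 2, pow_mul, ← mul_pow, inv_mul_cancel₀ (by simp [NeZero.ne q]),
      one_pow]
  simp_rw [prod_eq_sum_sum_trace_EV_mul_prod q _ _ (fun j d d' => hΦ j d d' u), mul_sum,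
    Fintype.card_fin]
  rw [sum_sum_sum_sum_comm]
  refine sum_congr rfl fun e _ => sum_congr rfl fun e' _ => ?_
  have hframe := (isTightFrame_EV q).sum_sum_trace_mul (EV q e)ᴴ (EV q e') M₁ M₂
  rw [Fintype.card_fin] at hframe
  calc _ = ((q : ℂ) ^ 2)⁻¹ ^ n *
        (((q : ℂ) ^ n) ^ 2 * ((EV q e)ᴴ * M₁ * EV q e' * M₂).trace) *
        ∏ j, mono u (wtf j (e j) (e' j)) := by rw [← mul_assoc, hscale, one_mul]
    _ = _ := by
      rw [← hframe]
      simp only [mul_sum, sum_mul]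
      exact sum_congr rfl fun _ _ => sum_congr rfl fun _ _ => by ring

/-- General quantum MacWilliams theorem for an arbitrary family of weight functions. -/
theorem stmt7 (q n k : ℕ) [NeZero q] (hq : 2 ≤ q) (hn : 1 ≤ n) (hk : 1 ≤ k)
    (M₁ M₂ : Matrix ((Fin n) → Fin q) ((Fin n) → Fin q) ℂ)
    (hM₁ : M₁.IsHermitian) (hM₂ : M₂.IsHermitian)
    (wtf : Fin n → (ZMod q × ZMod q) → (ZMod q × ZMod q) → Option (Fin k → ℕ))
    (Φ : (Fin k → ℂ) → (Fin k → ℂ))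
    (hΦ : ∀ (j : Fin n) (d d' : ZMod q × ZMod q) (u : Fin k → ℂ),
      mono (Φ u) (wtf j d d') =
        ((q : ℂ) ^ 2)⁻¹ * ∑ e : ZMod q × ZMod q, ∑ e' : ZMod q × ZMod q,
          Matrix.trace ((Epauli q e)ᴴ * Epauli q d * Epauli q e' * (Epauli q d')ᴴ) *
            mono u (wtf j e e')) (u : Fin k → ℂ) :
    (∑ p : Fin n → ZMod q × ZMod q, ∑ p' : Fin n → ZMod q × ZMod q,
        Matrix.trace ((EV q p)ᴴ * M₁ * EV q p' * M₂) *
          ∏ j, mono u (wtf j (p j) (p' j))) =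
      ∑ p : Fin n → ZMod q × ZMod q, ∑ p' : Fin n → ZMod q × ZMod q,
        Matrix.trace ((EV q p)ᴴ * M₁) * Matrix.trace (EV q p' * M₂) *
          ∏ j, mono (Φ u) (wtf j (p j) (p' j)) :=
  stmt7_general q n k M₁ M₂ wtf Φ hΦ u
end
end
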